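/- arXiv:0712.2172 — 2 statements merged into one kernel-verified Lean document; each statement's English description precedes it below -/
import Mathlib

section
/- If φ belongs to 𝓛(F^×,ψ) and α ∈ F^×, then the function x ↦ φ(αx) belongs to 𝓛(F^×,ψ) and ∫^{F^×} φ(αx) d^×x = ∫^{F^×} φ(x) d^×x. -/
noncomputable section

open MeasureTheory

/-- A field `F` with a split valuation `ν : F^× → Γ` (split by `t`), with residue field `k`,
residue map `ρ : O_F → k`, where `Γ` has a minimal positive element `one`. -/
structure LiftSetup (Γ F k : Type*) [AddCommGroup Γ] [LinearOrder Γ] [IsOrderedAddMonoid Γ] [Field F] [Field k] where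
  /-- the valuation (recorded on nonzero elements) -/
  ν : F → Γ
  /-- the splitting homomorphism `t : Γ → F^×` -/
  t : Γ → F
  /-- the residue map (recorded on the valuation ring) -/
  ρ : F → k
  /-- the minimal positive element of `Γ` -/
  one : Γ
  one_pos : 0 < one
  one_min : ∀ γ : Γ, 0 < γ → one ≤ γ
  ν_mul : ∀ x y : F, x ≠ 0 → y ≠ 0 → ν (x * y) = ν x + ν y
  ν_add : ∀ x y : F, x ≠ 0 → y ≠ 0 → x + y ≠ 0 → min (ν x) (ν y) ≤ ν (x + y)
  t_ne : ∀ γ : Γ, t γ ≠ 0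
  t_add : ∀ γ δ : Γ, t (γ + δ) = t γ * t δ
  ν_t : ∀ γ : Γ, ν (t γ) = γ
  ρ_add : ∀ x y : F, (x = 0 ∨ 0 ≤ ν x) → (y = 0 ∨ 0 ≤ ν y) → ρ (x + y) = ρ x + ρ y
  ρ_mul : ∀ x y : F, (x = 0 ∨ 0 ≤ ν x) → (y = 0 ∨ 0 ≤ ν y) → ρ (x * y) = ρ x * ρ y
  ρ_one : ρ 1 = 1
  ρ_surj : ∀ u : k, ∃ x : F, (x = 0 ∨ 0 ≤ ν x) ∧ ρ x = u
  ρ_eq_zero : ∀ x : F, (x = 0 ∨ 0 ≤ ν x) → (ρ x = 0 ↔ (x = 0 ∨ 0 < ν x))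

namespace LiftSetup

variable {Γ F k : Type*} [AddCommGroup Γ] [LinearOrder Γ] [IsOrderedAddMonoid Γ] [Field F] [Field k]
variable (S : LiftSetup Γ F k)

/-- The ring of integers `O_F` of the valuation. -/
def integers : Set F := {x | x = 0 ∨ 0 ≤ S.ν x}

/-- The translated fractional ideal `a + t(γ)O_F`. -/
def fracIdeal (a : F) (γ : Γ) : Set F := {x | (x - a) * S.t (-γ) ∈ S.integers}

/-- The lift `f^{a,γ}` of a function `f` on the residue field `k`:
`f^{a,γ}(x) = f(ρ((x-a)t(-γ)))` for `x ∈ a + t(γ)O_F` and `0` otherwise. -/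
def lift {A : Type*} [Zero A] (f : k → A) (a : F) (γ : Γ) : F → A :=
  (S.fracIdeal a γ).indicator fun x => f (S.ρ ((x - a) * S.t (-γ)))

/-- The homomorphism `η : F^× → k^×`, `x ↦ ρ(x t(-ν x))`. -/
def η (x : F) : k := S.ρ (x * S.t (-S.ν x))

end LiftSetup

section CGamma

variable (Γ : Type*) [AddCommGroup Γ] [LinearOrder Γ] [IsOrderedAddMonoid Γ]

instance : IsDomain (AddMonoidAlgebra ℂ Γ) := NoZeroDivisors.to_isDomain _

/-- `ℂ(Γ)`: the field of fractions of the complex group algebra of `Γ`. -/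
abbrev CGamma : Type _ := FractionRing (AddMonoidAlgebra ℂ Γ)

/-- The canonical embedding `ℂ → ℂ(Γ)`. -/
def embC : ℂ →+* CGamma Γ :=
  (algebraMap (AddMonoidAlgebra ℂ Γ) (CGamma Γ)).comp AddMonoidAlgebra.singleZeroRingHom

variable {Γ}

/-- The basis element `X^γ` of `ℂ(Γ)`. -/
def Xp (γ : Γ) : CGamma Γ :=
  algebraMap (AddMonoidAlgebra ℂ Γ) (CGamma Γ) (AddMonoidAlgebra.single γ 1)

end CGamma

section GoodChar

variable {Γ F k : Type*} [AddCommGroup Γ] [LinearOrder Γ] [IsOrderedAddMonoid Γ] [Field F] [Field k] [TopologicalSpace k]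

/-- `ψ` is a nontrivial good character of `F` of conductor `𝔣`: a homomorphism from the
additive group of `F` to the complex unit circle, trivial on `t(𝔣)O_F`, nontrivial on
`t(𝔣-1)O_F`, whose induced map `ψ̄` on the residue field `k` (given by
`ψ̄(ρ(x)) = ψ(t(𝔣-1)x)` for `x ∈ O_F`) is well defined and continuous. -/
def LiftSetup.IsGoodCharacter (S : LiftSetup Γ F k) (ψ : F → ℂ) (𝔣 : Γ) : Prop :=
  (∀ x y : F, ψ (x + y) = ψ x * ψ y) ∧
  (∀ x : F, ‖ψ x‖ = 1) ∧
  (∀ x ∈ S.integers, ψ (S.t 𝔣 * x) = 1) ∧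
  (∃ x ∈ S.integers, ψ (S.t (𝔣 - S.one) * x) ≠ 1) ∧
  (∃ ψbar : k → ℂ, Continuous ψbar ∧
    ∀ x ∈ S.integers, ψbar (S.ρ x) = ψ (S.t (𝔣 - S.one) * x))

end GoodChar

section LFmu

variable {Γ F k : Type*} [AddCommGroup Γ] [LinearOrder Γ] [IsOrderedAddMonoid Γ] [Field F] [Field k]
  [MeasurableSpace k]

open MeasureTheory

/-- `𝓛(F)`: the `ℂ(Γ)`-span of the lifts of Haar-integrable functions on `k`. -/
def LFmu (S : LiftSetup Γ F k) (μ : Measure k) : Submodule (CGamma Γ) (F → CGamma Γ) :=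
  Submodule.span (CGamma Γ)
    {g | ∃ f : k → ℂ, Integrable f μ ∧ ∃ (a : F) (γ : Γ),
        g = S.lift (fun u => embC Γ (f u)) a γ}

theorem liftC_mem_mu (S : LiftSetup Γ F k) (μ : Measure k)
    {f : k → ℂ} (hf : Integrable f μ) (a : F) (γ : Γ) :
    S.lift (fun u => embC Γ (f u)) a γ ∈ LFmu S μ :=
  Submodule.subset_span ⟨f, hf, a, γ, rfl⟩

/-- `𝓛^γ`: the complex span of the lifts of Haar-integrable functions at height `γ`. -/
def Lheight (S : LiftSetup Γ F k) (μ : Measure k) (γ : Γ) : Submodule ℂ (F → ℂ) :=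
  Submodule.span ℂ {g | ∃ f : k → ℂ, Integrable f μ ∧ ∃ a : F, g = S.lift f a γ}

end LFmu

section LFpsi

variable {Γ F k : Type*} [AddCommGroup Γ] [LinearOrder Γ] [IsOrderedAddMonoid Γ] [Field F] [Field k]
  [MeasurableSpace k]

open MeasureTheory

/-- `𝓛(F,ψ)`: the `ℂ(Γ)`-span of the functions `f·ψ_a` for `f ∈ 𝓛(F)`, `a ∈ F`. -/
def LFpsi (S : LiftSetup Γ F k) (μ : Measure k) (ψ : F → ℂ) :
    Submodule (CGamma Γ) (F → CGamma Γ) :=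
  Submodule.span (CGamma Γ)
    {g | ∃ f ∈ LFmu S μ, ∃ a : F, g = fun x => embC Γ (ψ (a * x)) * f x}

end LFpsi

section Mult

variable {Γ F k : Type*} [AddCommGroup Γ] [LinearOrder Γ] [IsOrderedAddMonoid Γ] [Field F] [Field k]
  [MeasurableSpace k]

open MeasureTheory

/-- The absolute value `|α|_F = |η(α)|·X^{ν(α)} ∈ ℂ(Γ)` of `α ∈ F^×`. -/
noncomputable def absF (S : LiftSetup Γ F k) (abs : k → ℝ) (x : F) : CGamma Γ :=
  embC Γ ((abs (S.η x) : ℝ) : ℂ) * Xp (S.ν x)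

/-- `φ ∈ 𝓛(F^×,ψ)`: the function `x ↦ φ(x)|x|_F⁻¹` on `F^×` extends to a function
in `𝓛(F,ψ)`. -/
def MultIntegrable (S : LiftSetup Γ F k) (μ : Measure k) (ψ : F → ℂ) (abs : k → ℝ)
    (φ : F → CGamma Γ) : Prop :=
  ∃ h ∈ LFpsi S μ ψ, ∀ x : F, x ≠ 0 → h x = φ x * (absF S abs x)⁻¹

open scoped Classical in
/-- The multiplicative integral `∫^{F^×} φ(x) d^×x := ∫^F φ(x)|x|_F⁻¹ dx`. -/
noncomputable def multIntegral (S : LiftSetup Γ F k) (μ : Measure k) (ψ : F → ℂ)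
    (abs : k → ℝ) (Jext : LFpsi S μ ψ →ₗ[CGamma Γ] CGamma Γ)
    (φ : F → CGamma Γ) : CGamma Γ :=
  if hm : MultIntegrable S μ ψ abs φ then
    Jext ⟨Classical.choose hm, (Classical.choose_spec hm).1⟩
  else 0

end Mult

/-!
Multiplication by `α` preserves `𝓛(F,ψ)`, since it turns a lift `f^{b,γ}` into the lift
`(f(η(α)·))^{b/α, γ-ν(α)}`; hence `g ↦ |α|_F ∫^F g(αx) dx` is again a translation-invariant
functional that agrees with `∫^F` on lifts. Such a functional is unique: a generator `ψ_a f^{b,γ}`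
is a multiple of a lift when `a t(γ) ∈ O_F`, and otherwise translation by `x₀/a`, where
`ψ(x₀) ≠ 1`, multiplies it by `ψ(x₀)`, so every translation-invariant functional kills it.
Thus `∫^F g(αx) dx = |α|_F⁻¹ ∫^F g`. For `g` vanishing on `F^×` and `α = t(1)` this reads
`∫^F g = X^{-1} ∫^F g`, so `∫^F g = 0`: the integral `∫^{F^×}` does not depend on the chosen
extension, and the theorem follows from `|αx|_F = |α|_F |x|_F`.
-/

namespace LiftSetup

variable {Γ F k : Type*} [AddCommGroup Γ] [LinearOrder Γ] [IsOrderedAddMonoid Γ] [Field F] [Field k]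
variable (S : LiftSetup Γ F k)

theorem t_zero : S.t 0 = 1 :=
  (mul_eq_left₀ (S.t_ne 0)).mp (by rw [← S.t_add, add_zero])

theorem t_mul_t_neg (γ : Γ) : S.t γ * S.t (-γ) = 1 := by
  rw [← S.t_add, add_neg_cancel, t_zero]

theorem ν_one : S.ν 1 = 0 := by
  simpa using S.ν_mul 1 1 one_ne_zero one_ne_zero

theorem ν_inv {x : F} (hx : x ≠ 0) : S.ν x⁻¹ = -S.ν x := by
  have h := S.ν_mul x x⁻¹ hx (inv_ne_zero hx)
  rw [mul_inv_cancel₀ hx, ν_one] at h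
  exact eq_neg_of_add_eq_zero_right h.symm

theorem ν_neg_one : S.ν (-1 : F) = 0 := by
  have h : S.ν (-1 : F) + S.ν (-1) = 0 := by
    rw [← S.ν_mul _ _ (by simp) (by simp), neg_one_mul, neg_neg, ν_one]
  rcases lt_trichotomy (S.ν (-1 : F)) 0 with hlt | heq | hgt
  · exact absurd h (add_neg hlt hlt).ne
  · exact heq
  · exact absurd h (add_pos hgt hgt).ne'

theorem ν_neg {x : F} (hx : x ≠ 0) : S.ν (-x) = S.ν x := by
  rw [← neg_one_mul, S.ν_mul _ _ (by simp) hx, ν_neg_one, zero_add]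

theorem ν_mul_t {x : F} (hx : x ≠ 0) (γ : Γ) : S.ν (x * S.t γ) = S.ν x + γ := by
  rw [S.ν_mul _ _ hx (S.t_ne γ), S.ν_t]

theorem mul_mem_integers {x y : F} (hx : x ∈ S.integers) (hy : y ∈ S.integers) :
    x * y ∈ S.integers := by
  by_cases hx0 : x = 0
  · exact Or.inl (by simp [hx0])
  by_cases hy0 : y = 0
  · exact Or.inl (by simp [hy0])
  refine Or.inr ?_
  rw [S.ν_mul x y hx0 hy0]
  exact add_nonneg (hx.resolve_left hx0) (hy.resolve_left hy0)

theorem add_mem_integers {x y : F} (hx : x ∈ S.integers) (hy : y ∈ S.integers) :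
    x + y ∈ S.integers := by
  by_cases hx0 : x = 0
  · simpa [hx0] using hy
  by_cases hy0 : y = 0
  · simpa [hy0] using hx
  by_cases hxy : x + y = 0
  · exact Or.inl hxy
  exact Or.inr ((le_min (hx.resolve_left hx0) (hy.resolve_left hy0)).trans
    (S.ν_add x y hx0 hy0 hxy))

theorem neg_mem_integers {x : F} (hx : x ∈ S.integers) : -x ∈ S.integers := by
  by_cases hx0 : x = 0
  · exact Or.inl (by simp [hx0])
  exact Or.inr (by rw [S.ν_neg hx0]; exact hx.resolve_left hx0)

theorem add_mem_integers_iff {x y : F} (hy : y ∈ S.integers) :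
    x + y ∈ S.integers ↔ x ∈ S.integers :=
  ⟨fun h => by simpa using S.add_mem_integers h (S.neg_mem_integers hy),
    fun h => S.add_mem_integers h hy⟩

theorem ν_unit {x : F} (hx : x ≠ 0) : S.ν (x * S.t (-S.ν x)) = 0 := by
  rw [S.ν_mul_t hx, add_neg_cancel]

theorem unit_mem_integers {x : F} (hx : x ≠ 0) : x * S.t (-S.ν x) ∈ S.integers :=
  Or.inr (S.ν_unit hx).ge

theorem unit_inv_mem_integers {x : F} (hx : x ≠ 0) : (x * S.t (-S.ν x))⁻¹ ∈ S.integers := by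
  refine Or.inr (le_of_eq ?_)
  rw [S.ν_inv (mul_ne_zero hx (S.t_ne _)), ν_unit S hx, neg_zero]

theorem η_ne_zero {x : F} (hx : x ≠ 0) : S.η x ≠ 0 := by
  rw [η, Ne, S.ρ_eq_zero _ (S.unit_mem_integers hx), ν_unit S hx]
  exact not_or.mpr ⟨mul_ne_zero hx (S.t_ne _), lt_irrefl 0⟩

theorem η_mul {x y : F} (hx : x ≠ 0) (hy : y ≠ 0) : S.η (x * y) = S.η x * S.η y := by
  rw [η, η, η, ← S.ρ_mul _ _ (S.unit_mem_integers hx) (S.unit_mem_integers hy),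
    S.ν_mul x y hx hy, neg_add, S.t_add]
  ring_nf

theorem η_t (γ : Γ) : S.η (S.t γ) = 1 := by
  rw [η, S.ν_t, t_mul_t_neg, S.ρ_one]

theorem mul_unit_mem_integers_iff {α : F} (hα : α ≠ 0) (y : F) :
    y * (α * S.t (-S.ν α)) ∈ S.integers ↔ y ∈ S.integers := by
  refine ⟨fun h => ?_, fun h => S.mul_mem_integers h (S.unit_mem_integers hα)⟩
  have := S.mul_mem_integers h (S.unit_inv_mem_integers hα)
  rwa [mul_inv_cancel_right₀ (mul_ne_zero hα (S.t_ne _))] at this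

theorem mul_sub_mul_t_neg {α : F} (hα : α ≠ 0) (x b : F) (γ : Γ) :
    (α * x - b) * S.t (-γ) =
      (x - b * α⁻¹) * S.t (-(γ - S.ν α)) * (α * S.t (-S.ν α)) := by
  have ht : S.t (-(γ - S.ν α)) * S.t (-S.ν α) = S.t (-γ) := by
    rw [← S.t_add]
    abel_nf
  rw [← ht]
  field_simp

theorem lift_mul_apply {A : Type*} [Zero A] (f : k → A) {α : F} (hα : α ≠ 0)
    (b : F) (γ : Γ) (x : F) :
    S.lift f b γ (α * x) = S.lift (fun u => f (S.η α * u)) (b * α⁻¹) (γ - S.ν α) x := by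
  have hmem : α * x ∈ S.fracIdeal b γ ↔ x ∈ S.fracIdeal (b * α⁻¹) (γ - S.ν α) := by
    simp only [fracIdeal, Set.mem_ofPred_eq, S.mul_sub_mul_t_neg hα,
      S.mul_unit_mem_integers_iff hα]
  by_cases hx : x ∈ S.fracIdeal (b * α⁻¹) (γ - S.ν α)
  · rw [lift, lift, Set.indicator_of_mem (hmem.mpr hx), Set.indicator_of_mem hx,
      S.mul_sub_mul_t_neg hα, S.ρ_mul _ _ hx (S.unit_mem_integers hα), mul_comm, η]
  · rw [lift, lift, Set.indicator_of_notMem (mt hmem.mp hx), Set.indicator_of_notMem hx]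

theorem lift_add_apply {A : Type*} [Zero A] (f : k → A) (b : F) (γ : Γ) {τ : F}
    (hτ : τ * S.t (-γ) ∈ S.integers) (hτρ : S.ρ (τ * S.t (-γ)) = 0) (x : F) :
    S.lift f b γ (x + τ) = S.lift f b γ x := by
  have hsplit : (x + τ - b) * S.t (-γ) = (x - b) * S.t (-γ) + τ * S.t (-γ) := by ring
  have hmem : x + τ ∈ S.fracIdeal b γ ↔ x ∈ S.fracIdeal b γ := by
    simp only [fracIdeal, Set.mem_ofPred_eq, hsplit, S.add_mem_integers_iff hτ]
  by_cases hx : x ∈ S.fracIdeal b γ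
  · rw [lift, Set.indicator_of_mem (hmem.mpr hx), Set.indicator_of_mem hx, hsplit,
      S.ρ_add _ _ hx hτ, hτρ, add_zero]
  · rw [lift, Set.indicator_of_notMem (mt hmem.mp hx), Set.indicator_of_notMem hx]

/-- `ψ_a · f^{b,γ}` -/
def twistedLift (ψ : F → ℂ) (f : k → ℂ) (a b : F) (γ : Γ) : F → CGamma Γ :=
  fun x => embC Γ (ψ (a * x)) * S.lift (fun u => embC Γ (f u)) b γ x

variable {ψ : F → ℂ}

theorem twistedLift_eq_smul_lift (hadd : ∀ x y : F, ψ (x + y) = ψ x * ψ y) {ψbar : k → ℂ}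
    (hψbar : ∀ x ∈ S.integers, ψbar (S.ρ x) = ψ x) (f : k → ℂ) {a : F} (b : F) {γ : Γ}
    (hc : a * S.t γ ∈ S.integers) :
    S.twistedLift ψ f a b γ =
      embC Γ (ψ (a * b)) • S.lift (fun u => embC Γ (ψbar (S.ρ (a * S.t γ) * u) * f u)) b γ := by
  funext x
  by_cases hx : x ∈ S.fracIdeal b γ
  · have hax : a * x = a * b + a * S.t γ * ((x - b) * S.t (-γ)) := by
      linear_combination (-(a * (x - b))) * S.t_mul_t_neg γ
    rw [twistedLift, Pi.smul_apply, lift, lift, Set.indicator_of_mem hx,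
      Set.indicator_of_mem hx, hax, hadd, ← hψbar _ (S.mul_mem_integers hc hx),
      S.ρ_mul _ _ hc hx, smul_eq_mul, map_mul, map_mul, mul_assoc]
  · simp [twistedLift, lift, Set.indicator_of_notMem hx]

theorem twistedLift_add_eq_smul (hadd : ∀ x y : F, ψ (x + y) = ψ x * ψ y) (f : k → ℂ) {a : F}
    (b : F) {γ : Γ} (hc : a * S.t γ ∉ S.integers) {x₀ : F} (hx₀ : x₀ ∈ S.integers) :
    (fun x => S.twistedLift ψ f a b γ (x + a⁻¹ * x₀)) =
      embC Γ (ψ x₀) • S.twistedLift ψ f a b γ := by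
  have ha : a ≠ 0 := by rintro rfl; exact hc (Or.inl (zero_mul _))
  have hνa : S.ν a + γ < 0 := by
    rw [← S.ν_mul_t ha]
    exact not_le.mp fun h => hc (Or.inr h)
  set τ := a⁻¹ * x₀ with hτdef
  have hτ : τ * S.t (-γ) = 0 ∨ 0 < S.ν (τ * S.t (-γ)) := by
    by_cases hx₀0 : x₀ = 0
    · exact Or.inl (by simp [τ, hx₀0])
    right
    rw [S.ν_mul_t (mul_ne_zero (inv_ne_zero ha) hx₀0), S.ν_mul _ _ (inv_ne_zero ha) hx₀0,
      S.ν_inv ha, show -S.ν a + S.ν x₀ + -γ = S.ν x₀ + -(S.ν a + γ) by abel]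
    exact add_pos_of_nonneg_of_pos (hx₀.resolve_left hx₀0) (neg_pos.mpr hνa)
  have hτO : τ * S.t (-γ) ∈ S.integers := hτ.imp id le_of_lt
  funext x
  simp only [twistedLift, Pi.smul_apply, smul_eq_mul]
  rw [S.lift_add_apply _ _ _ hτO ((S.ρ_eq_zero _ hτO).mpr hτ), mul_add,
    show a * τ = x₀ by rw [hτdef, mul_inv_cancel_left₀ ha], hadd, map_mul]
  ring

end LiftSetup

section CGamma

variable {Γ : Type*} [AddCommGroup Γ]

theorem Xp_add (γ δ : Γ) : (Xp (γ + δ) : CGamma Γ) = Xp γ * Xp δ := by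
  rw [Xp, Xp, Xp, ← map_mul, AddMonoidAlgebra.single_mul_single, one_mul]

theorem Xp_zero : (Xp 0 : CGamma Γ) = 1 := by
  rw [Xp, ← AddMonoidAlgebra.one_def, map_one]

theorem Xp_mul_Xp_neg (γ : Γ) : (Xp γ : CGamma Γ) * Xp (-γ) = 1 := by
  rw [← Xp_add, add_neg_cancel, Xp_zero]

theorem Xp_eq_one_iff {γ : Γ} : (Xp γ : CGamma Γ) = 1 ↔ γ = 0 := by
  refine ⟨fun h => ?_, fun h => h ▸ Xp_zero⟩
  rw [← Xp_zero, Xp, Xp] at h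
  exact (AddMonoidAlgebra.single_left_inj one_ne_zero).mp
    (IsFractionRing.injective (AddMonoidAlgebra ℂ Γ) (CGamma Γ) h)

end CGamma

namespace LiftSetup.IsGoodCharacter

variable {Γ F k : Type*} [AddCommGroup Γ] [LinearOrder Γ] [IsOrderedAddMonoid Γ] [Field F] [Field k]
  [TopologicalSpace k] {S : LiftSetup Γ F k} {ψ : F → ℂ}

theorem map_zero (hψ : S.IsGoodCharacter ψ S.one) : ψ 0 = 1 := by
  have h0 : ψ 0 ≠ 0 := norm_ne_zero_iff.mp (by rw [hψ.2.1]; exact one_ne_zero)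
  exact (mul_eq_left₀ h0).mp (by rw [← hψ.1, add_zero])

theorem exists_mem_integers_ne_one (hψ : S.IsGoodCharacter ψ S.one) :
    ∃ x ∈ S.integers, ψ x ≠ 1 := by
  simpa [S.t_zero] using hψ.2.2.2.1

theorem exists_residue (hψ : S.IsGoodCharacter ψ S.one) :
    ∃ ψbar : k → ℂ, Continuous ψbar ∧ (∀ v, ‖ψbar v‖ = 1) ∧
      ∀ x ∈ S.integers, ψbar (S.ρ x) = ψ x := by
  obtain ⟨ψbar, hcont, hψbar⟩ := hψ.2.2.2.2
  have hψbar' : ∀ x ∈ S.integers, ψbar (S.ρ x) = ψ x := by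
    simpa [S.t_zero] using hψbar
  refine ⟨ψbar, hcont, fun v => ?_, hψbar'⟩
  obtain ⟨x, hx, rfl⟩ := S.ρ_surj v
  rw [hψbar' x hx, hψ.2.1]

end LiftSetup.IsGoodCharacter

section Modulus

open MeasureTheory

variable {k : Type*} [TopologicalSpace k] [MeasurableSpace k]

theorem exists_integrable_integral_ne_zero [Nonempty k] [LocallyCompactSpace k]
    [OpensMeasurableSpace k] (μ : Measure k) [IsFiniteMeasureOnCompacts μ]
    [μ.IsOpenPosMeasure] : ∃ g : k → ℂ, Integrable g μ ∧ ∫ u, g u ∂μ ≠ 0 := by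
  obtain ⟨K, hK, hKx⟩ := exists_compact_mem_nhds (Classical.arbitrary k)
  have hU : MeasurableSet (interior K) := isOpen_interior.measurableSet
  have hpos : μ (interior K) ≠ 0 :=
    (isOpen_interior.measure_pos μ ⟨_, mem_interior_iff_mem_nhds.mpr hKx⟩).ne'
  have hfin : μ (interior K) ≠ ⊤ :=
    (measure_mono interior_subset |>.trans_lt hK.measure_lt_top).ne
  refine ⟨(interior K).indicator fun _ => 1, (integrable_indicator_iff hU).mpr
    (integrableOn_const hfin), ?_⟩
  rw [integral_indicator_const _ hU, Complex.real_smul, mul_one, Complex.ofReal_ne_zero]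
  exact ENNReal.toReal_ne_zero.mpr ⟨hpos, hfin⟩

variable [Field k]

def IsModulus (μ : Measure k) (abs : k → ℝ) : Prop :=
  ∀ (g : k → ℂ), Integrable g μ → ∀ c : k, c ≠ 0 →
    Integrable (fun u => g (c * u)) μ ∧ (∫ u, g (c * u) ∂μ) = (abs c)⁻¹ • ∫ u, g u ∂μ

variable [LocallyCompactSpace k] [OpensMeasurableSpace k]
  {μ : Measure k} [IsFiniteMeasureOnCompacts μ] [μ.IsOpenPosMeasure] {abs : k → ℝ}

namespace IsModulus

theorem abs_mul (habs : IsModulus μ abs) {c d : k} (hc : c ≠ 0) (hd : d ≠ 0) :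
    abs (c * d) = abs c * abs d := by
  obtain ⟨g, hg, hI⟩ := exists_integrable_integral_ne_zero μ
  have hcd := (habs g hg (c * d) (mul_ne_zero hc hd)).2
  have hgc := habs g hg c hc
  have hdc := (habs _ hgc.1 d hd).2
  simp only [mul_assoc] at hcd
  rw [hcd, hgc.2, smul_smul] at hdc
  rw [← inv_inj, smul_left_injective ℝ hI hdc, mul_inv, mul_comm]

theorem abs_one (habs : IsModulus μ abs) : abs 1 = 1 := by
  obtain ⟨g, hg, hI⟩ := exists_integrable_integral_ne_zero μ
  have h := (habs g hg 1 one_ne_zero).2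
  simp only [one_mul] at h
  rw [← inv_eq_one, smul_left_injective ℝ hI (h.symm.trans (one_smul ℝ _).symm)]

theorem abs_ne_zero (habs : IsModulus μ abs) {c : k} (hc : c ≠ 0) : abs c ≠ 0 :=
  left_ne_zero_of_mul_eq_one (by rw [← habs.abs_mul hc (inv_ne_zero hc), mul_inv_cancel₀ hc,
    habs.abs_one])

end IsModulus

end Modulus

section AbsF

open MeasureTheory

variable {Γ F k : Type*} [AddCommGroup Γ] [LinearOrder Γ] [IsOrderedAddMonoid Γ] [Field F] [Field k]
  [TopologicalSpace k] [LocallyCompactSpace k] [MeasurableSpace k] [OpensMeasurableSpace k]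
  {μ : Measure k} [IsFiniteMeasureOnCompacts μ] [μ.IsOpenPosMeasure] {abs : k → ℝ}
  (S : LiftSetup Γ F k)

theorem absF_mul (habs : IsModulus μ abs) {x y : F} (hx : x ≠ 0) (hy : y ≠ 0) :
    absF S abs (x * y) = absF S abs x * absF S abs y := by
  rw [absF, absF, absF, S.η_mul hx hy, habs.abs_mul (S.η_ne_zero hx) (S.η_ne_zero hy),
    S.ν_mul x y hx hy, Xp_add, Complex.ofReal_mul, map_mul]
  ring

theorem absF_ne_zero (habs : IsModulus μ abs) {x : F} (hx : x ≠ 0) : absF S abs x ≠ 0 :=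
  mul_ne_zero ((map_ne_zero _).mpr (Complex.ofReal_ne_zero.mpr (habs.abs_ne_zero
    (S.η_ne_zero hx)))) (left_ne_zero_of_mul_eq_one (Xp_mul_Xp_neg _))

theorem absF_t (habs : IsModulus μ abs) (γ : Γ) : absF S abs (S.t γ) = Xp γ := by
  rw [absF, S.η_t, habs.abs_one, S.ν_t, Complex.ofReal_one, map_one, one_mul]

end AbsF

theorem Submodule.span_coe_preimage_eq_top {R M : Type*} [Semiring R] [AddCommMonoid M]
    [Module R M] {p : Submodule R M} {s : Set M} (h : p = Submodule.span R s) :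
    Submodule.span R (((↑) : p → M) ⁻¹' s) = ⊤ := by
  subst h
  exact Submodule.span_span_coe_preimage

open MeasureTheory in
theorem integrable_comp_const_mul_mul {k : Type*} [Mul k] [TopologicalSpace k] [ContinuousMul k]
    [MeasurableSpace k] [OpensMeasurableSpace k] {μ : Measure k} {χ : k → ℂ}
    (hχ : Continuous χ) (hχ1 : ∀ v, ‖χ v‖ ≤ 1) {f : k → ℂ} (hf : Integrable f μ) (c : k) :
    Integrable (fun u => χ (c * u) * f u) μ :=
  hf.bdd_mul (hχ.comp (continuous_const_mul c)).aestronglyMeasurable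
    (Filter.Eventually.of_forall fun _ => hχ1 _)

section LFpsi

open MeasureTheory

variable {Γ F k : Type*} [AddCommGroup Γ] [LinearOrder Γ] [IsOrderedAddMonoid Γ] [Field F] [Field k]
  [MeasurableSpace k] (S : LiftSetup Γ F k) (μ : Measure k) {ψ : F → ℂ}

theorem lift_mem_LFpsi (hψ0 : ψ 0 = 1) {f : k → ℂ} (hf : Integrable f μ) (b : F) (γ : Γ) :
    S.lift (fun u => embC Γ (f u)) b γ ∈ LFpsi S μ ψ := by
  have h : (fun x => embC Γ (ψ (0 * x)) * S.lift (fun u => embC Γ (f u)) b γ x) ∈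
      LFpsi S μ ψ := Submodule.subset_span ⟨_, liftC_mem_mu S μ hf b γ, 0, rfl⟩
  simpa only [zero_mul, hψ0, map_one, one_mul] using h

theorem LFpsi_eq_span_twistedLift (ψ : F → ℂ) : LFpsi S μ ψ = Submodule.span (CGamma Γ)
    {g | ∃ f : k → ℂ, Integrable f μ ∧ ∃ (a b : F) (γ : Γ), g = S.twistedLift ψ f a b γ} := by
  refine le_antisymm (Submodule.span_le.mpr ?_) (Submodule.span_le.mpr ?_)
  · rintro _ ⟨f, hf, a, rfl⟩
    refine Submodule.map_span_le (LinearMap.mulLeft (CGamma Γ) fun x => embC Γ (ψ (a * x)))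
      _ _ |>.mpr ?_ (Submodule.mem_map_of_mem hf)
    rintro _ ⟨f, hf, b, γ, rfl⟩
    exact Submodule.subset_span ⟨f, hf, a, b, γ, rfl⟩
  · rintro _ ⟨f, hf, a, b, γ, rfl⟩
    exact Submodule.subset_span ⟨_, liftC_mem_mu S μ hf b γ, a, rfl⟩

variable {S μ} {abs : k → ℝ}

theorem LFmu_le_comap_funLeft_mul (habs : IsModulus μ abs) {α : F} (hα : α ≠ 0) :
    LFmu S μ ≤ (LFmu S μ).comap (LinearMap.funLeft (CGamma Γ) (CGamma Γ) (α * ·)) := by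
  refine Submodule.span_le.mpr ?_
  rintro _ ⟨f, hf, b, γ, rfl⟩
  have h := liftC_mem_mu S μ (habs f hf _ (S.η_ne_zero hα)).1 (b * α⁻¹) (γ - S.ν α)
  rwa [← funext (S.lift_mul_apply (fun u => embC Γ (f u)) hα b γ)] at h

theorem LFpsi_le_comap_funLeft_mul (habs : IsModulus μ abs) {α : F} (hα : α ≠ 0) :
    LFpsi S μ ψ ≤ (LFpsi S μ ψ).comap (LinearMap.funLeft (CGamma Γ) (CGamma Γ) (α * ·)) := by
  refine Submodule.span_le.mpr ?_
  rintro _ ⟨f, hf, a, rfl⟩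
  refine Submodule.subset_span ⟨_, LFmu_le_comap_funLeft_mul habs hα hf, a * α, ?_⟩
  funext x
  simp only [LinearMap.funLeft_apply, mul_assoc]

end LFpsi

section Functional

open MeasureTheory

variable {Γ F k : Type*} [AddCommGroup Γ] [LinearOrder Γ] [IsOrderedAddMonoid Γ] [Field F] [Field k]
  [MeasurableSpace k] {S : LiftSetup Γ F k} {μ : Measure k} {ψ : F → ℂ}

def IsLiftIntegral (J : LFpsi S μ ψ →ₗ[CGamma Γ] CGamma Γ) : Prop :=
  ∀ (f : k → ℂ), Integrable f μ → ∀ (a : F) (γ : Γ)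
    (hmem : S.lift (fun u => embC Γ (f u)) a γ ∈ LFpsi S μ ψ),
    J ⟨S.lift (fun u => embC Γ (f u)) a γ, hmem⟩ = embC Γ (∫ u, f u ∂μ) * Xp γ

def IsTranslationInvariant (J : LFpsi S μ ψ →ₗ[CGamma Γ] CGamma Γ) : Prop :=
  ∀ (g : F → CGamma Γ) (hg : g ∈ LFpsi S μ ψ) (τ : F)
    (hg' : (fun x => g (x + τ)) ∈ LFpsi S μ ψ),
    J ⟨fun x => g (x + τ), hg'⟩ = J ⟨g, hg⟩

variable [TopologicalSpace k] [IsTopologicalRing k] [OpensMeasurableSpace k]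

theorem eq_zero_of_isTranslationInvariant (hψ : S.IsGoodCharacter ψ S.one)
    {J : LFpsi S μ ψ →ₗ[CGamma Γ] CGamma Γ} (hJ : IsTranslationInvariant J)
    (hlift : ∀ (f : k → ℂ), Integrable f μ → ∀ (b : F) (γ : Γ)
      (hmem : S.lift (fun u => embC Γ (f u)) b γ ∈ LFpsi S μ ψ),
      J ⟨S.lift (fun u => embC Γ (f u)) b γ, hmem⟩ = 0) :
    J = 0 := by
  obtain ⟨x₀, hx₀, hψx₀⟩ := hψ.exists_mem_integers_ne_one
  obtain ⟨ψbar, hcont, hnorm, hψbar⟩ := hψ.exists_residue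
  refine LinearMap.ext_on (Submodule.span_coe_preimage_eq_top
    (LFpsi_eq_span_twistedLift S μ ψ)) ?_
  rintro ⟨_, hg⟩ ⟨f, hf, a, b, γ, rfl⟩
  by_cases hc : a * S.t γ ∈ S.integers
  · have hf' := integrable_comp_const_mul_mul hcont (fun v => (hnorm v).le) hf
      (S.ρ (a * S.t γ))
    have e : (⟨_, hg⟩ : LFpsi S μ ψ) = embC Γ (ψ (a * b)) •
        ⟨_, lift_mem_LFpsi S μ hψ.map_zero hf' b γ⟩ :=
      Subtype.ext (S.twistedLift_eq_smul_lift hψ.1 hψbar f b hc)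
    rw [e, map_smul, hlift _ hf', smul_zero, LinearMap.zero_apply]
  · have hshift := S.twistedLift_add_eq_smul hψ.1 f b hc hx₀
    have hg' : (fun x => S.twistedLift ψ f a b γ (x + a⁻¹ * x₀)) ∈ LFpsi S μ ψ := by
      rw [hshift]
      exact Submodule.smul_mem _ _ hg
    have h := hJ _ hg _ hg'
    rw [show (⟨_, hg'⟩ : LFpsi S μ ψ) = embC Γ (ψ x₀) • ⟨_, hg⟩ from Subtype.ext hshift,
      map_smul, smul_eq_mul, mul_left_eq_self₀] at h
    exact h.resolve_left fun h1 => hψx₀ ((embC Γ).injective (h1.trans (map_one _).symm))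

theorem IsLiftIntegral.ext (hψ : S.IsGoodCharacter ψ S.one)
    {J₁ J₂ : LFpsi S μ ψ →ₗ[CGamma Γ] CGamma Γ} (h₁ : IsLiftIntegral J₁)
    (h₂ : IsLiftIntegral J₂) (hinv₁ : IsTranslationInvariant J₁)
    (hinv₂ : IsTranslationInvariant J₂) : J₁ = J₂ :=
  sub_eq_zero.mp <| eq_zero_of_isTranslationInvariant hψ
    (fun g hg τ hg' => by
      rw [LinearMap.sub_apply, LinearMap.sub_apply, hinv₁ g hg τ hg', hinv₂ g hg τ hg'])
    (fun f hf b γ hmem => by rw [LinearMap.sub_apply, h₁ f hf, h₂ f hf, sub_self])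

variable [LocallyCompactSpace k] [IsFiniteMeasureOnCompacts μ] [μ.IsOpenPosMeasure]
  {abs : k → ℝ} {Jext : LFpsi S μ ψ →ₗ[CGamma Γ] CGamma Γ}

theorem IsLiftIntegral.map_comp_mul (hJext : IsLiftIntegral Jext)
    (hψ : S.IsGoodCharacter ψ S.one) (habs : IsModulus μ abs)
    (hJinv : IsTranslationInvariant Jext) {α : F} (hα : α ≠ 0) {g : F → CGamma Γ}
    (hg : g ∈ LFpsi S μ ψ) (hgα : (fun x => g (α * x)) ∈ LFpsi S μ ψ) :
    Jext ⟨fun x => g (α * x), hgα⟩ = (absF S abs α)⁻¹ * Jext ⟨g, hg⟩ := by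
  set J := absF S abs α • Jext.comp
    ((LinearMap.funLeft (CGamma Γ) (CGamma Γ) (α * ·)).restrict
      fun _ hg => LFpsi_le_comap_funLeft_mul habs hα hg)
  have hJ : IsLiftIntegral J := by
    intro f hf b γ hmem
    have hfα := habs f hf _ (S.η_ne_zero hα)
    have hmem' := lift_mem_LFpsi S μ hψ.map_zero hfα.1 (b * α⁻¹) (γ - S.ν α)
    have e : J ⟨_, hmem⟩ = absF S abs α * Jext ⟨_, hmem'⟩ :=
      congrArg (absF S abs α * Jext ·)
        (Subtype.ext (funext (S.lift_mul_apply (fun u => embC Γ (f u)) hα b γ)))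
    have hne : embC Γ (abs (S.η α)) ≠ 0 :=
      (map_ne_zero _).mpr (Complex.ofReal_ne_zero.mpr (habs.abs_ne_zero (S.η_ne_zero hα)))
    rw [e, hJext _ hfα.1, hfα.2, absF, sub_eq_add_neg, Xp_add, Complex.real_smul, map_mul,
      Complex.ofReal_inv, map_inv₀]
    field_simp
    linear_combination (embC Γ (∫ u, f u ∂μ) * Xp γ) * Xp_mul_Xp_neg (S.ν α)
  have hJinv' : IsTranslationInvariant J := by
    intro g hg τ hg'
    have hshift : (fun x => g (α * x + τ)) = fun x => g (α * (x + α⁻¹ * τ)) := by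
      simp only [mul_add, mul_inv_cancel_left₀ hα]
    have hmem : (fun x => g (α * (x + α⁻¹ * τ))) ∈ LFpsi S μ ψ :=
      hshift ▸ LFpsi_le_comap_funLeft_mul habs hα hg'
    calc J ⟨_, hg'⟩ = absF S abs α * Jext ⟨_, hmem⟩ :=
          congrArg (absF S abs α * Jext ·) (Subtype.ext hshift)
      _ = J ⟨g, hg⟩ :=
          congrArg (absF S abs α * ·) (hJinv _ (LFpsi_le_comap_funLeft_mul habs hα hg) _ hmem)
  have hJα := LinearMap.congr_fun (hJ.ext hψ hJext hJinv' hJinv) ⟨g, hg⟩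
  rw [← hJα]
  exact (inv_mul_cancel_left₀ (absF_ne_zero S habs hα) _).symm

theorem IsLiftIntegral.map_eq_of_eqOn_ne_zero (hJext : IsLiftIntegral Jext)
    (hψ : S.IsGoodCharacter ψ S.one) (habs : IsModulus μ abs)
    (hJinv : IsTranslationInvariant Jext) {g₁ g₂ : F → CGamma Γ} (hg₁ : g₁ ∈ LFpsi S μ ψ)
    (hg₂ : g₂ ∈ LFpsi S μ ψ) (h : ∀ x, x ≠ 0 → g₁ x = g₂ x) :
    Jext ⟨g₁, hg₁⟩ = Jext ⟨g₂, hg₂⟩ := by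
  have hmem : g₁ - g₂ ∈ LFpsi S μ ψ := sub_mem hg₁ hg₂
  have hinv : (fun x => (g₁ - g₂) (S.t S.one * x)) = g₁ - g₂ := by
    funext x
    by_cases hx : x = 0
    · rw [hx, mul_zero]
    · simp [h x hx, h _ (mul_ne_zero (S.t_ne _) hx)]
  have hscale := hJext.map_comp_mul hψ habs hJinv (S.t_ne S.one) hmem (hinv.symm ▸ hmem)
  rw [show (⟨_, hinv.symm ▸ hmem⟩ : LFpsi S μ ψ) = ⟨_, hmem⟩ from Subtype.ext hinv,
    absF_t S habs, eq_comm, mul_left_eq_self₀, inv_eq_one, Xp_eq_one_iff] at hscale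
  rw [← sub_eq_zero, ← map_sub]
  exact hscale.resolve_left S.one_pos.ne'

theorem IsLiftIntegral.multIntegral_eq (hJext : IsLiftIntegral Jext)
    (hψ : S.IsGoodCharacter ψ S.one) (habs : IsModulus μ abs)
    (hJinv : IsTranslationInvariant Jext) {φ g : F → CGamma Γ} (hg : g ∈ LFpsi S μ ψ)
    (hgφ : ∀ x, x ≠ 0 → g x = φ x * (absF S abs x)⁻¹) :
    multIntegral S μ ψ abs Jext φ = Jext ⟨g, hg⟩ := by
  have hφ : MultIntegrable S μ ψ abs φ := ⟨g, hg, hgφ⟩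
  rw [multIntegral, dif_pos hφ]
  exact hJext.map_eq_of_eqOn_ne_zero hψ habs hJinv _ _ fun x hx => by
    rw [(Classical.choose_spec hφ).2 x hx, hgφ x hx]

end Functional

open MeasureTheory in
theorem statement9_general
    {Γ F k : Type*} [AddCommGroup Γ] [LinearOrder Γ] [IsOrderedAddMonoid Γ] [Field F] [Field k]
    [TopologicalSpace k] [IsTopologicalRing k] [LocallyCompactSpace k]
    [MeasurableSpace k] [BorelSpace k]
    (μ : Measure k) [μ.IsAddHaarMeasure]
    (S : LiftSetup Γ F k)
    (ψ : F → ℂ) (hψ : S.IsGoodCharacter ψ S.one)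
    -- the normalized absolute value on `k`:
    (abs : k → ℝ)
    (habs : ∀ (g : k → ℂ), Integrable g μ → ∀ c : k, c ≠ 0 →
      Integrable (fun u => g (c * u)) μ ∧ (∫ u, g (c * u) ∂μ) = (abs c)⁻¹ • ∫ u, g u ∂μ)
    -- the translation-invariant extension of `∫^F` to `𝓛(F,ψ)`:
    (Jext : LFpsi S μ ψ →ₗ[CGamma Γ] CGamma Γ)
    (hJext : ∀ (f : k → ℂ) (hf : Integrable f μ) (a : F) (γ : Γ)
      (hmem : S.lift (fun u => embC Γ (f u)) a γ ∈ LFpsi S μ ψ),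
      Jext ⟨S.lift (fun u => embC Γ (f u)) a γ, hmem⟩ = embC Γ (∫ u, f u ∂μ) * Xp γ)
    (hJinv : ∀ (g : F → CGamma Γ) (hg : g ∈ LFpsi S μ ψ) (τ : F)
      (hg' : (fun x => g (x + τ)) ∈ LFpsi S μ ψ),
      Jext ⟨fun x => g (x + τ), hg'⟩ = Jext ⟨g, hg⟩)
    (φ : F → CGamma Γ) (hφ : MultIntegrable S μ ψ abs φ) (α : F) (hα : α ≠ 0) :
    MultIntegrable S μ ψ abs (fun x => φ (α * x)) ∧
    multIntegral S μ ψ abs Jext (fun x => φ (α * x)) = multIntegral S μ ψ abs Jext φ := by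
  replace habs : IsModulus μ abs := habs
  replace hJext : IsLiftIntegral Jext := hJext
  obtain ⟨g, hg, hgφ⟩ := hφ
  have hgα : (fun x => g (α * x)) ∈ LFpsi S μ ψ := LFpsi_le_comap_funLeft_mul habs hα hg
  have hg' : absF S abs α • (fun x => g (α * x)) ∈ LFpsi S μ ψ := Submodule.smul_mem _ _ hgα
  have hg'φ : ∀ x, x ≠ 0 →
      (absF S abs α • fun x => g (α * x)) x = φ (α * x) * (absF S abs x)⁻¹ := by
    intro x hx
    rw [Pi.smul_apply, smul_eq_mul, hgφ _ (mul_ne_zero hα hx), absF_mul S habs hα hx, mul_inv,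
      mul_left_comm, mul_inv_cancel_left₀ (absF_ne_zero S habs hα)]
  refine ⟨⟨_, hg', hg'φ⟩, ?_⟩
  rw [hJext.multIntegral_eq hψ habs hJinv hg' hg'φ, hJext.multIntegral_eq hψ habs hJinv hg hgφ,
    show (⟨_, hg'⟩ : LFpsi S μ ψ) = absF S abs α • ⟨_, hgα⟩ from rfl, map_smul, smul_eq_mul,
    hJext.map_comp_mul hψ habs hJinv hα hg hgα, mul_inv_cancel_left₀ (absF_ne_zero S habs hα)]

open MeasureTheory in
/-- If `φ ∈ 𝓛(F^×,ψ)` and `α ∈ F^×`, then `x ↦ φ(αx)` belongs to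
`𝓛(F^×,ψ)` and `∫^{F^×} φ(αx) d^×x = ∫^{F^×} φ(x) d^×x`. -/
theorem statement9
    {Γ F k : Type*} [AddCommGroup Γ] [LinearOrder Γ] [IsOrderedAddMonoid Γ] [Field F] [Field k]
    [TopologicalSpace k] [IsTopologicalRing k] [LocallyCompactSpace k]
    [MeasurableSpace k] [BorelSpace k]
    (hk_nondiscrete : ¬ IsOpen ({0} : Set k))
    (μ : Measure k) [μ.IsAddHaarMeasure]
    (S : LiftSetup Γ F k)
    (ψ : F → ℂ) (hψ : S.IsGoodCharacter ψ S.one)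
    -- the normalized absolute value on `k`:
    (abs : k → ℝ)
    (habs_pos : ∀ c : k, c ≠ 0 → 0 < abs c)
    (habs : ∀ (g : k → ℂ), Integrable g μ → ∀ c : k, c ≠ 0 →
      Integrable (fun u => g (c * u)) μ ∧ (∫ u, g (c * u) ∂μ) = (abs c)⁻¹ • ∫ u, g u ∂μ)
    -- the translation-invariant extension of `∫^F` to `𝓛(F,ψ)`:
    (Jext : LFpsi S μ ψ →ₗ[CGamma Γ] CGamma Γ)
    (hJext : ∀ (f : k → ℂ) (hf : Integrable f μ) (a : F) (γ : Γ)
      (hmem : S.lift (fun u => embC Γ (f u)) a γ ∈ LFpsi S μ ψ),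
      Jext ⟨S.lift (fun u => embC Γ (f u)) a γ, hmem⟩ = embC Γ (∫ u, f u ∂μ) * Xp γ)
    (hJinv : ∀ (g : F → CGamma Γ) (hg : g ∈ LFpsi S μ ψ) (τ : F)
      (hg' : (fun x => g (x + τ)) ∈ LFpsi S μ ψ),
      Jext ⟨fun x => g (x + τ), hg'⟩ = Jext ⟨g, hg⟩)
    (φ : F → CGamma Γ) (hφ : MultIntegrable S μ ψ abs φ) (α : F) (hα : α ≠ 0) :
    MultIntegrable S μ ψ abs (fun x => φ (α * x)) ∧
    multIntegral S μ ψ abs Jext (fun x => φ (α * x)) = multIntegral S μ ψ abs Jext φ :=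
  statement9_general μ S ψ hψ abs habs Jext hJext hJinv φ hφ α hα
end
end

section
/- Let g : K → ℂ and s ∈ ℂ with Re(s) > 0 be such that x ↦ g(x)|x|^{2s} is absolutely integrable on K^× with respect to the multiplicative Haar measure d^×x. Define g' : K^× × K^× → ℂ by g'(x,y) := g(π^{min(w(x),w(y))−w(x)}·x)·|xy|^s. Then g' is integrable on K^× × K^× and ∫_{K^×}∫_{K^×} g'(x,y) d^×x d^×y = μ^×(O_K^×)·((1+q^{−s})/(1−q^{−s}))·∫_{K^×} g(x)|x|^{2s} d^×x, where μ^× denotes the multiplicative Haar measure d^×x. -/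
/-!
Split `K^× × K^×` into the rectangles `U_m × U_n`, where `U_n = {x | w x = n}`. With
`t = q^{-s}`, on `U_m × U_n` the integrand is `g(π^{min(m,n)-m} x) t^{m+n}`, and the dilation
`x ↦ π^{min(m,n)-m} x` preserves `d^×x` and maps `U_m` onto `U_{min(m,n)}`; so the rectangle
contributes `μ^×(O_K^×) a_{min(m,n)} t^{m+n}` with `a_k = ∫_{U_k} g d^×x`. Reindexing `ℤ²` by
`k = min(m,n)`, `d = m - n` gives `m + n = 2k + |d|`, and the double series factors as
`∑_k a_k t^{2k} · ∑_d t^{|d|} = ∫ g(x)|x|^{2s} d^×x · (1+t)/(1-t)`. The same computation with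
`‖g‖` and `‖t‖ < 1` gives absolute convergence, hence integrability.
-/

noncomputable section

open MeasureTheory
open scoped Classical

section NALF

variable {K : Type*}

/-- The normalized absolute value `|x| = q^{-w(x)}` of a nonarchimedean local field. -/
noncomputable def absv [Field K] (q : ℕ) (w : K → ℤ) (x : K) : ℝ :=
  if x = 0 then 0 else (q : ℝ) ^ (-(w x))

/-- The map `∇ : K → K`, `x ↦ π^{w(x)}·x` (and `∇0 = 0`). -/
noncomputable def nabla [Field K] (w : K → ℤ) (π : K) (x : K) : K :=
  if x = 0 then 0 else π ^ (w x) * x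

/-- The operator `W`: `Wg(x) = g(π^{-w(x)/2}x)` if `w(x)` is even,
`Wg(x) = g(π^{(-w(x)-1)/2}x)` if `w(x)` is odd, and `Wg(0) = g(0)`. -/
noncomputable def Wop [Field K] (w : K → ℤ) (π : K) (g : K → ℂ) : K → ℂ := fun x =>
  if x = 0 then g 0
  else if Even (w x) then g (π ^ (-(w x) / 2) * x)
  else g (π ^ ((-(w x) - 1) / 2) * x)

/-- The Fourier transform `ĝ(y) = ∫ g(x)ψ(xy) dμ(x)` on `K`. -/
noncomputable def fourierK [Field K] [MeasurableSpace K] (μ : Measure K) (ψ : K → ℂ)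
    (g : K → ℂ) : K → ℂ :=
  fun y => ∫ x, g x * ψ (x * y) ∂μ

/-- The `*`-transform `g* = (Wg)^ ∘ ∇`. -/
noncomputable def starT [Field K] [MeasurableSpace K] (μ : Measure K) (ψ : K → ℂ)
    (w : K → ℤ) (π : K) (g : K → ℂ) : K → ℂ :=
  fun y => fourierK μ ψ (Wop w π g) (nabla w π y)

/-- The Schwartz–Bruhat space of a nonarchimedean local field: locally constant,
compactly supported complex-valued functions. -/
def SBset (K : Type*) [TopologicalSpace K] : Set (K → ℂ) :=
  {g | IsLocallyConstant g ∧ HasCompactSupport g}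

/-- `K` is a nonarchimedean local field with normalized valuation `w`, prime `π`, residue
cardinality `q`, and Haar measure `μ`: the topology is the valuation topology, the ring of
integers is compact, and scaling by `c` multiplies the Haar measure by `q^{-w(c)}` (the
normalized module). -/
structure IsNALocalField [Field K] [TopologicalSpace K] [MeasurableSpace K]
    (μ : Measure K) (w : K → ℤ) (π : K) (q : ℕ) : Prop where
  one_lt_q : 1 < q
  pi_ne : π ≠ 0
  w_pi : w π = 1
  w_mul : ∀ x y : K, x ≠ 0 → y ≠ 0 → w (x * y) = w x + w y
  w_add : ∀ x y : K, x ≠ 0 → y ≠ 0 → x + y ≠ 0 → min (w x) (w y) ≤ w (x + y)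
  nhds_basis : (nhds (0 : K)).HasBasis (fun _ : ℤ => True)
    (fun n => {x : K | x = 0 ∨ n ≤ w x})
  compact_integers : IsCompact {x : K | x = 0 ∨ 0 ≤ w x}
  scaling : ∀ g : K → ℂ, Integrable g μ → ∀ c : K, c ≠ 0 →
    Integrable (fun x => g (c * x)) μ ∧
    (∫ x, g (c * x) ∂μ) = ((q : ℝ) ^ (w c)) • ∫ x, g x ∂μ

/-- `ψ` is a nontrivial continuous additive character of `K` (valued in the unit circle). -/
def IsAddCharacter [Field K] [TopologicalSpace K] (ψ : K → ℂ) : Prop :=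
  (∀ x y : K, ψ (x + y) = ψ x * ψ y) ∧ (∀ x : K, ‖ψ x‖ = 1) ∧
  Continuous ψ ∧ (∃ x : K, ψ x ≠ 1)

/-- `ψ` has conductor `d`: `ψ` is trivial on `π^d O_K` but nontrivial on `π^{d-1} O_K`. -/
def HasConductor [Field K] (w : K → ℤ) (ψ : K → ℂ) (d : ℤ) : Prop :=
  (∀ x : K, (x = 0 ∨ d ≤ w x) → ψ x = 1) ∧ (∃ x : K, x ≠ 0 ∧ d - 1 ≤ w x ∧ ψ x ≠ 1)

end NALF

/-- The multiplicative Haar measure `d^×x = |x|⁻¹dμ(x)` on `K^×` (as a measure on `K`). -/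
noncomputable def mulHaar {K : Type*} [Field K] [MeasurableSpace K] (μ : Measure K)
    (q : ℕ) (w : K → ℤ) : Measure K :=
  μ.withDensity fun x => ENNReal.ofReal ((absv q w x)⁻¹)

namespace MeasureTheory

theorem IntegrableOn.mul_prod {α β L : Type*} [MeasurableSpace α] [MeasurableSpace β]
    {μ : Measure α} {ν : Measure β} [SFinite μ] [SFinite ν] [NormedRing L] {f : α → L}
    {g : β → L} {s : Set α} {t : Set β} (hf : IntegrableOn f s μ) (hg : IntegrableOn g t ν) :
    IntegrableOn (fun z : α × β => f z.1 * g z.2) (s ×ˢ t) (μ.prod ν) := by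
  rw [IntegrableOn, ← Measure.prod_restrict]
  exact Integrable.mul_prod hf hg

theorem hasSum_setIntegral_of_support_subset {ι X E : Type*} [Countable ι] [MeasurableSpace X]
    [NormedAddCommGroup E] [NormedSpace ℝ E] {ρ : Measure X} {S : ι → Set X} {f : X → E}
    (hS : ∀ i, MeasurableSet (S i)) (hd : Pairwise (Function.onFun Disjoint S))
    (hf : Function.support f ⊆ ⋃ i, S i) (hfi : Integrable f ρ) :
    HasSum (fun i => ∫ x in S i, f x ∂ρ) (∫ x, f x ∂ρ) := by
  rw [← setIntegral_eq_integral_of_forall_compl_eq_zero fun x hx =>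
    Function.notMem_support.mp fun hfx => hx (hf hfx)]
  exact hasSum_integral_iUnion hS hd hfi.integrableOn

end MeasureTheory

section Series

variable {𝕜 : Type*} [NormedField 𝕜] {t : 𝕜}

theorem hasSum_pow_natAbs (ht : ‖t‖ < 1) :
    HasSum (fun d : ℤ => t ^ d.natAbs) ((1 + t) / (1 - t)) := by
  have ht1 : 1 - t ≠ 0 := sub_ne_zero.mpr fun h => by simp [← h] at ht
  have hgeom : HasSum (fun n : ℕ => t ^ n) (1 - t)⁻¹ := hasSum_geometric_of_norm_lt_one ht
  convert HasSum.of_nat_of_neg_add_one (f := fun d : ℤ => t ^ d.natAbs) hgeom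
    ((hgeom.mul_left t).congr_fun fun n => by
      rw [← pow_succ', show (-((n : ℤ) + 1)).natAbs = n + 1 by omega]) using 1
  field_simp

def minSubEquiv : ℤ × ℤ ≃ ℤ × ℤ where
  toFun p := (min p.1 p.2, p.1 - p.2)
  invFun p := (p.1 + max p.2 0, p.1 - min p.2 0)
  left_inv p := by ext <;> dsimp only <;> omega
  right_inv p := by ext <;> dsimp only <;> omega

theorem hasSum_mul_zpow_min [CompleteSpace 𝕜] {c : ℤ → 𝕜} (ht0 : t ≠ 0) (ht : ‖t‖ < 1)
    (hc : Summable fun k => ‖c k * t ^ (2 * k)‖) :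
    HasSum (fun p : ℤ × ℤ => c (min p.1 p.2) * t ^ (p.1 + p.2))
      ((∑' k, c k * t ^ (2 * k)) * ((1 + t) / (1 - t))) := by
  have hsplit : (fun p : ℤ × ℤ => c (min p.1 p.2) * t ^ (p.1 + p.2)) =
      (fun p : ℤ × ℤ => c p.1 * t ^ (2 * p.1) * t ^ p.2.natAbs) ∘ minSubEquiv := by
    funext ⟨m, n⟩
    have hmn : m + n = 2 * min m n + ((m - n).natAbs : ℤ) := by omega
    simp only [Function.comp_apply, minSubEquiv, Equiv.coe_fn_mk, mul_assoc, ← zpow_natCast,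
      ← zpow_add₀ ht0, hmn]
  have hnorm : Summable fun d : ℤ => ‖t ^ d.natAbs‖ := by
    simpa only [norm_pow] using (hasSum_pow_natAbs (t := ‖t‖) (by simpa using ht)).summable
  have hprod : Summable fun p : ℤ × ℤ => c p.1 * t ^ (2 * p.1) * t ^ p.2.natAbs :=
    summable_mul_of_summable_norm (f := fun k => c k * t ^ (2 * k))
      (g := fun d : ℤ => t ^ d.natAbs) hc hnorm
  have hsum : HasSum (fun k => c k * t ^ (2 * k)) (∑' k, c k * t ^ (2 * k)) := hc.of_norm.hasSum
  rw [hsplit, minSubEquiv.hasSum_iff]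
  exact (HasSum.mul (α := 𝕜) hsum (hasSum_pow_natAbs ht) hprod :)

end Series

section Valuation

variable {K : Type*} [Field K] {w : K → ℤ} {q : ℕ}

-- `π^n O_K` and `π^n O_K^×`
def valBall (w : K → ℤ) (n : ℤ) : Set K := {x | x = 0 ∨ n ≤ w x}

def valShell (w : K → ℤ) (n : ℤ) : Set K := {x | x ≠ 0 ∧ w x = n}

theorem valShell_eq_diff (n : ℤ) : valShell w n = valBall w n \ valBall w (n + 1) := by
  ext x
  simp only [valShell, valBall, Set.mem_sdiff, Set.mem_ofPred_eq, not_or, not_le]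
  constructor
  · rintro ⟨hx, rfl⟩
    exact ⟨Or.inr le_rfl, hx, Int.lt_succ _⟩
  · rintro ⟨hxn | hxn, hx, hxn'⟩
    · exact absurd hxn hx
    · exact ⟨hx, by omega⟩

theorem iInter_valBall : ⋂ n, valBall w n = {0} := by
  ext x
  simp only [valBall, Set.mem_iInter, Set.mem_ofPred_eq, Set.mem_singleton_iff]
  refine ⟨fun hx => (hx (w x + 1)).resolve_right (by omega), fun hx _ => Or.inl hx⟩

theorem iUnion_valShell : ⋃ n, valShell w n = {0}ᶜ := by
  ext x
  simp [valShell]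

theorem pairwise_disjoint_valShell : Pairwise (Function.onFun Disjoint (valShell w)) := by
  intro m n hmn
  rw [Function.onFun, Set.disjoint_left]
  rintro x ⟨-, rfl⟩ ⟨-, rfl⟩
  exact hmn rfl

theorem iUnion_valShell_prod :
    ⋃ p : ℤ × ℤ, valShell w p.1 ×ˢ valShell w p.2 = ({0}ᶜ : Set K) ×ˢ {0}ᶜ := by
  rw [← iUnion_valShell, Set.iUnion_prod]

theorem pairwise_disjoint_valShell_prod :
    Pairwise (Function.onFun Disjoint fun p : ℤ × ℤ => valShell w p.1 ×ˢ valShell w p.2) := by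
  rintro ⟨m, n⟩ ⟨m', n'⟩ hp
  rw [Function.onFun, Set.disjoint_prod]
  by_cases hm : m = m'
  · exact Or.inr (pairwise_disjoint_valShell fun hn => hp (Prod.ext hm hn))
  · exact Or.inl (pairwise_disjoint_valShell hm)

theorem absv_of_ne_zero {x : K} (hx : x ≠ 0) : absv q w x = (q : ℝ) ^ (-w x) := if_neg hx

theorem absv_nonneg (x : K) : 0 ≤ absv q w x := by
  unfold absv
  split_ifs
  exacts [le_rfl, zpow_nonneg (Nat.cast_nonneg q) _]

theorem ofReal_zpow_neg_cpow {a : ℝ} (ha : 0 ≤ a) (k : ℤ) (s : ℂ) :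
    ((a ^ (-k) : ℝ) : ℂ) ^ s = ((a : ℂ) ^ (-s)) ^ k := by
  rw [← Complex.cpow_int_mul, ← Real.rpow_intCast, ← Complex.cpow_mul_ofReal_nonneg ha]
  push_cast
  ring_nf

theorem ofReal_absv_cpow {x : K} (hx : x ≠ 0) (s : ℂ) :
    (absv q w x : ℂ) ^ s = ((q : ℂ) ^ (-s)) ^ w x := by
  rw [absv_of_ne_zero hx, ofReal_zpow_neg_cpow (Nat.cast_nonneg q)]
  rfl

theorem cpow_neg_two_mul_zpow (x s : ℂ) (k : ℤ) :
    (x ^ (-(2 * s))) ^ k = (x ^ (-s)) ^ (2 * k) := by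
  rw [show -(2 * s) = (2 : ℕ) * -s by push_cast; ring, Complex.cpow_nat_mul, zpow_mul]
  norm_cast

end Valuation

section Integrands

variable {K : Type*} [Field K] {w : K → ℤ} {π : K} {q : ℕ}

def mulAbsCpow (q : ℕ) (w : K → ℤ) (g : K → ℂ) (z : ℂ) (x : K) : ℂ :=
  if x ≠ 0 then g x * (absv q w x : ℂ) ^ z else 0

def gPrime (q : ℕ) (w : K → ℤ) (π : K) (g : K → ℂ) (s : ℂ) (p : K × K) : ℂ :=
  if p.1 ≠ 0 ∧ p.2 ≠ 0 then
    g (π ^ (min (w p.1) (w p.2) - w p.1) * p.1) * (((absv q w p.1 * absv q w p.2 : ℝ) : ℂ) ^ s)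
  else 0

theorem mulAbsCpow_of_mem_valShell {k : ℤ} {x : K} (hx : x ∈ valShell w k) (g : K → ℂ) (z : ℂ) :
    mulAbsCpow q w g z x = g x * ((q : ℂ) ^ (-z)) ^ k := by
  rw [mulAbsCpow, if_pos hx.1, ofReal_absv_cpow hx.1, hx.2]

theorem support_mulAbsCpow_subset (g : K → ℂ) (z : ℂ) :
    Function.support (mulAbsCpow q w g z) ⊆ ⋃ n, valShell w n := by
  rw [iUnion_valShell]
  intro x hx hx0
  exact hx (by simp [mulAbsCpow, Set.mem_singleton_iff.mp hx0])

theorem support_gPrime_subset (g : K → ℂ) (s : ℂ) :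
    Function.support (gPrime q w π g s) ⊆ ⋃ p : ℤ × ℤ, valShell w p.1 ×ˢ valShell w p.2 := by
  rw [iUnion_valShell_prod]
  intro p hp
  by_contra hp0
  exact hp (if_neg (by simpa [not_and_or] using hp0))

end Integrands

namespace IsNALocalField

variable {K : Type*} [Field K] [TopologicalSpace K] [MeasurableSpace K] {μ : Measure K}
  {w : K → ℤ} {π : K} {q : ℕ} (h : IsNALocalField μ w π q)
include h

local notation "ν" => mulHaar μ q w
local notation "ν²" => Measure.prod (mulHaar μ q w) (mulHaar μ q w)

theorem w_one : w 1 = 0 := by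
  have := h.w_mul 1 1 one_ne_zero one_ne_zero
  rw [mul_one] at this
  omega

theorem w_zpow (k : ℤ) : w (π ^ k) = k := by
  have w_pow (n : ℕ) : w (π ^ n) = n := by
    induction n with
    | zero => simpa using h.w_one
    | succ n ih =>
      rw [pow_succ, h.w_mul _ _ (pow_ne_zero n h.pi_ne) h.pi_ne, ih, h.w_pi]
      push_cast
      rfl
  obtain ⟨n, rfl | rfl⟩ := k.eq_nat_or_neg
  · simpa using w_pow n
  · have := h.w_mul _ _ (pow_ne_zero n h.pi_ne) (inv_ne_zero (pow_ne_zero n h.pi_ne))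
    rw [mul_inv_cancel₀ (pow_ne_zero n h.pi_ne), h.w_one, w_pow] at this
    rw [zpow_neg, zpow_natCast]
    omega

theorem w_zpow_mul (k : ℤ) {x : K} (hx : x ≠ 0) : w (π ^ k * x) = k + w x := by
  rw [h.w_mul _ _ (zpow_ne_zero k h.pi_ne) hx, h.w_zpow]

theorem preimage_zpow_mul_valShell (k n : ℤ) :
    (π ^ (k - n) * ·) ⁻¹' valShell w k = valShell w n := by
  ext x
  simp only [valShell, Set.mem_preimage, Set.mem_ofPred_eq, mul_ne_zero_iff,
    and_iff_right (zpow_ne_zero (k - n) h.pi_ne)]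
  refine and_congr_right fun hx => ?_
  rw [h.w_zpow_mul _ hx]
  omega

theorem isOpen_valBall [IsTopologicalAddGroup K] (n : ℤ) : IsOpen (valBall w n) := by
  have hnhds : valBall w n ∈ nhds (0 : K) := h.nhds_basis.mem_of_mem trivial
  have hadd : ∀ x ∈ valBall w n, ∀ y ∈ valBall w n, x + y ∈ valBall w n := by
    intro x hx y hy
    by_cases hx0 : x = 0
    · simpa [hx0] using hy
    by_cases hy0 : y = 0
    · simpa [hy0] using hx
    by_cases hxy : x + y = 0
    · exact Or.inl hxy
    exact Or.inr ((le_min (hx.resolve_left hx0) (hy.resolve_left hy0)).trans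
      (h.w_add x y hx0 hy0 hxy))
  refine isOpen_iff_mem_nhds.mpr fun x hx => ?_
  rw [← map_add_left_nhds_zero x, Filter.mem_map]
  exact Filter.mem_of_superset hnhds fun y hy => hadd x hx y hy

theorem q_pos : 0 < q := zero_lt_one.trans h.one_lt_q

theorem absv_ne_zero {x : K} (hx : x ≠ 0) : absv q w x ≠ 0 := by
  rw [absv_of_ne_zero hx]
  exact zpow_ne_zero _ (Nat.cast_ne_zero.mpr h.q_pos.ne')

theorem absv_mul (x y : K) : absv q w (x * y) = absv q w x * absv q w y := by
  by_cases hx : x = 0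
  · simp [absv, hx]
  by_cases hy : y = 0
  · simp [absv, hy]
  rw [absv_of_ne_zero (mul_ne_zero hx hy), absv_of_ne_zero hx, absv_of_ne_zero hy,
    h.w_mul x y hx hy, neg_add, zpow_add₀ (Nat.cast_ne_zero.mpr h.q_pos.ne')]

theorem norm_natCast_cpow_neg_lt_one {s : ℂ} (hs : 0 < s.re) : ‖(q : ℂ) ^ (-s)‖ < 1 := by
  rw [Complex.norm_natCast_cpow_of_pos h.q_pos, Complex.neg_re]
  exact Real.rpow_lt_one_of_one_lt_of_neg (by exact_mod_cast h.one_lt_q) (neg_neg_of_pos hs)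

theorem natCast_cpow_ne_zero (s : ℂ) : (q : ℂ) ^ s ≠ 0 :=
  norm_pos_iff.mp (Complex.norm_natCast_cpow_pos_of_pos h.q_pos s)

theorem gPrime_eqOn_valShell_prod (g : K → ℂ) (s : ℂ) (m n : ℤ) :
    Set.EqOn (gPrime q w π g s)
      (fun p => g (π ^ (min m n - m) * p.1) * ((q : ℂ) ^ (-s)) ^ m * ((q : ℂ) ^ (-s)) ^ n)
      (valShell w m ×ˢ valShell w n) := by
  rintro ⟨x, y⟩ ⟨⟨hx, rfl⟩, ⟨hy, rfl⟩⟩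
  dsimp only
  rw [gPrime, if_pos ⟨hx, hy⟩, ← h.absv_mul, ofReal_absv_cpow (mul_ne_zero hx hy),
    h.w_mul x y hx hy, zpow_add₀ (h.natCast_cpow_ne_zero _), mul_assoc]

theorem inv_absv_smul_comp_mul {E : Type*} [AddCommGroup E] [Module ℝ E] {c : K} (hc : c ≠ 0)
    (f : K → E) (x : K) :
    (absv q w x)⁻¹ • f (c * x) = absv q w c • ((absv q w (c * x))⁻¹ • f (c * x)) := by
  rw [smul_smul, h.absv_mul, mul_inv, ← mul_assoc, mul_inv_cancel₀ (h.absv_ne_zero hc), one_mul]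

theorem indicator_valShell_comp {E : Type*} [Zero E] (f : K → E) (k n : ℤ) :
    (valShell w n).indicator (fun x => f (π ^ (k - n) * x)) =
      fun x => (valShell w k).indicator f (π ^ (k - n) * x) := by
  rw [← h.preimage_zpow_mul_valShell k n]
  exact funext fun _ => Set.indicator_comp_right _

section Measurability

variable [IsTopologicalAddGroup K] [OpensMeasurableSpace K]

theorem measurableSet_valShell (n : ℤ) : MeasurableSet (valShell w n) := by
  rw [valShell_eq_diff]
  exact (h.isOpen_valBall n).measurableSet.diff (h.isOpen_valBall (n + 1)).measurableSet

theorem measurableSet_singleton_zero : MeasurableSet ({0} : Set K) := by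
  rw [← iInter_valBall (w := w)]
  exact MeasurableSet.iInter fun n => (h.isOpen_valBall n).measurableSet

theorem measurable_w : Measurable w := by
  refine measurable_to_countable' fun n => ?_
  have hsplit : w ⁻¹' {n} = valShell w n ∪ ({0} ∩ w ⁻¹' {n}) := by
    ext x
    by_cases hx : x = 0 <;> simp [valShell, hx]
  rw [hsplit]
  refine (h.measurableSet_valShell n).union ?_
  by_cases h0 : w 0 = n
  · rw [Set.inter_eq_left.mpr (by simpa using h0)]
    exact h.measurableSet_singleton_zero
  · rw [Set.singleton_inter_eq_empty.mpr (by simpa using h0)]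
    exact .empty

theorem measurable_absv : Measurable (absv q w) :=
  Measurable.ite h.measurableSet_singleton_zero measurable_const
    ((measurable_from_top (f := fun n : ℤ => (q : ℝ) ^ (-n))).comp h.measurable_w)

theorem measurable_ofReal_inv_absv : Measurable fun x => ENNReal.ofReal (absv q w x)⁻¹ :=
  h.measurable_absv.inv.ennreal_ofReal

theorem integrable_mulHaar_iff {E : Type*} [NormedAddCommGroup E] [NormedSpace ℝ E] {f : K → E} :
    Integrable f ν ↔ Integrable (fun x => (absv q w x)⁻¹ • f x) μ := by
  rw [mulHaar, integrable_withDensity_iff_integrable_smul' h.measurable_ofReal_inv_absv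
    (ae_of_all _ fun _ => ENNReal.ofReal_lt_top)]
  simp_rw [ENNReal.toReal_ofReal (inv_nonneg.mpr (absv_nonneg _))]

theorem integral_mulHaar {E : Type*} [NormedAddCommGroup E] [NormedSpace ℝ E] (f : K → E) :
    ∫ x, f x ∂ν = ∫ x, (absv q w x)⁻¹ • f x ∂μ := by
  rw [mulHaar, integral_withDensity_eq_integral_toReal_smul h.measurable_ofReal_inv_absv
    (ae_of_all _ fun _ => ENNReal.ofReal_lt_top)]
  simp_rw [ENNReal.toReal_ofReal (inv_nonneg.mpr (absv_nonneg _))]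

theorem integrable_comp_mul_left {f : K → ℂ} (hf : Integrable f ν) {c : K} (hc : c ≠ 0) :
    Integrable (fun x => f (c * x)) ν := by
  rw [h.integrable_mulHaar_iff] at hf ⊢
  simp_rw [h.inv_absv_smul_comp_mul hc]
  exact (h.scaling _ hf c hc).1.smul _

theorem integral_comp_mul_left (f : K → ℂ) {c : K} (hc : c ≠ 0) :
    ∫ x, f (c * x) ∂ν = ∫ x, f x ∂ν := by
  by_cases hf : Integrable f ν
  · rw [h.integral_mulHaar, h.integral_mulHaar]
    simp_rw [h.inv_absv_smul_comp_mul hc]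
    rw [integral_smul, (h.scaling _ (h.integrable_mulHaar_iff.mp hf) c hc).2, smul_smul,
      absv_of_ne_zero hc, ← zpow_add₀ (Nat.cast_ne_zero.mpr h.q_pos.ne'), neg_add_cancel,
      zpow_zero, one_smul]
  · have hfc : ¬Integrable (fun x => f (c * x)) ν := fun hfc => hf <| by
      simpa [← mul_assoc, mul_inv_cancel₀ hc] using h.integrable_comp_mul_left hfc (inv_ne_zero hc)
    rw [integral_undef hf, integral_undef hfc]

theorem integrableOn_valShell_comp {f : K → ℂ} {k : ℤ}
    (hf : IntegrableOn f (valShell w k) ν) (n : ℤ) :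
    IntegrableOn (fun x => f (π ^ (k - n) * x)) (valShell w n) ν := by
  rw [← integrable_indicator_iff (h.measurableSet_valShell n), h.indicator_valShell_comp]
  exact h.integrable_comp_mul_left ((integrable_indicator_iff (h.measurableSet_valShell k)).mpr hf)
    (zpow_ne_zero _ h.pi_ne)

theorem setIntegral_valShell_comp (f : K → ℂ) (k n : ℤ) :
    ∫ x in valShell w n, f (π ^ (k - n) * x) ∂ν = ∫ x in valShell w k, f x ∂ν := by
  rw [← integral_indicator (h.measurableSet_valShell n), h.indicator_valShell_comp,
    h.integral_comp_mul_left _ (zpow_ne_zero _ h.pi_ne),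
    integral_indicator (h.measurableSet_valShell k)]

theorem mulHaar_valShell_zero_lt_top [IsFiniteMeasureOnCompacts μ] : ν (valShell w 0) < ⊤ := by
  have hdens : Set.EqOn (fun x => ENNReal.ofReal (absv q w x)⁻¹) 1 (valShell w 0) := by
    rintro x ⟨hx, hw⟩
    simp [absv_of_ne_zero hx, hw]
  rw [mulHaar, withDensity_apply _ (h.measurableSet_valShell 0),
    setLIntegral_congr_fun (h.measurableSet_valShell 0) hdens, Pi.one_def, setLIntegral_one]
  exact (measure_mono fun x hx => Or.inr hx.2.ge).trans_lt h.compact_integers.measure_lt_top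

theorem measureReal_valShell (n : ℤ) :
    (ν).real (valShell w n) = (ν).real (valShell w 0) := by
  simpa [setIntegral_const] using h.setIntegral_valShell_comp (fun _ => (1 : ℂ)) 0 n

variable {g : K → ℂ}

theorem integrableOn_valShell_of_integrable_mulAbsCpow {z : ℂ}
    (hint : Integrable (mulAbsCpow q w g z) ν) (k : ℤ) : IntegrableOn g (valShell w k) ν := by
  refine IntegrableOn.congr_fun (hint.mul_const (((q : ℂ) ^ (-z)) ^ (-k))).integrableOn
    (fun x hx => ?_) (h.measurableSet_valShell k)
  rw [mulAbsCpow_of_mem_valShell hx, mul_assoc, ← zpow_add₀ (h.natCast_cpow_ne_zero _),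
    add_neg_cancel, zpow_zero, mul_one]

theorem hasSum_setIntegral_valShell_mulAbsCpow {z : ℂ}
    (hint : Integrable (mulAbsCpow q w g z) ν) :
    HasSum (fun k => (∫ x in valShell w k, g x ∂ν) * ((q : ℂ) ^ (-z)) ^ k)
      (∫ x, mulAbsCpow q w g z x ∂ν) := by
  refine (hasSum_setIntegral_of_support_subset h.measurableSet_valShell
    pairwise_disjoint_valShell (support_mulAbsCpow_subset g z) hint).congr_fun fun k => ?_
  rw [setIntegral_congr_fun (h.measurableSet_valShell k)
    fun x hx => mulAbsCpow_of_mem_valShell hx g z, integral_mul_const]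

theorem summable_setIntegral_norm_valShell {z : ℂ} (hint : Integrable (mulAbsCpow q w g z) ν) :
    Summable fun k => (∫ x in valShell w k, ‖g x‖ ∂ν) * ‖(q : ℂ) ^ (-z)‖ ^ k := by
  refine (hasSum_setIntegral_of_support_subset h.measurableSet_valShell
    pairwise_disjoint_valShell ((Function.support_comp_subset norm_zero _).trans
      (support_mulAbsCpow_subset g z)) hint.norm).summable.congr fun k => ?_
  rw [setIntegral_congr_fun (h.measurableSet_valShell k) fun x hx => by
    rw [Function.comp_apply, mulAbsCpow_of_mem_valShell hx g z, norm_mul, norm_zpow],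
    integral_mul_const]

variable [IsFiniteMeasureOnCompacts μ]

theorem mulHaar_valShell_lt_top (n : ℤ) : ν (valShell w n) < ⊤ := by
  simpa using (integrableOn_const_iff (C := (1 : ℂ))).mp
    (h.integrableOn_valShell_comp (integrableOn_const h.mulHaar_valShell_zero_lt_top.ne) n)

theorem sigmaFinite_mulHaar : SigmaFinite ν := by
  refine Measure.sigmaFinite_of_countable (S := insert {0} (Set.range (valShell w)))
    ((Set.countable_range _).insert _) ?_ ?_
  · rintro s (rfl | ⟨n, rfl⟩)
    · rw [mulHaar, withDensity_apply _ h.measurableSet_singleton_zero,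
        lintegral_singleton' h.measurable_ofReal_inv_absv]
      simp [absv]
    · exact h.mulHaar_valShell_lt_top n
  · rw [Set.sUnion_insert, Set.sUnion_range, iUnion_valShell, Set.union_compl_self]

theorem integrableOn_gPrime_valShell_prod (s : ℂ) {m n : ℤ}
    (hg : IntegrableOn g (valShell w (min m n)) ν) :
    IntegrableOn (gPrime q w π g s) (valShell w m ×ˢ valShell w n) ν² := by
  have := h.sigmaFinite_mulHaar
  refine IntegrableOn.congr_fun ?_ (h.gPrime_eqOn_valShell_prod g s m n).symm
    ((h.measurableSet_valShell m).prod (h.measurableSet_valShell n))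
  exact IntegrableOn.mul_prod ((h.integrableOn_valShell_comp hg m).mul_const _)
    (integrableOn_const (h.mulHaar_valShell_lt_top n).ne)

theorem setIntegral_gPrime_valShell_prod (s : ℂ) (m n : ℤ) :
    ∫ p in valShell w m ×ˢ valShell w n, gPrime q w π g s p ∂ν² =
      (∫ x in valShell w (min m n), g x ∂ν) * (ν).real (valShell w 0) *
        ((q : ℂ) ^ (-s)) ^ (m + n) := by
  have := h.sigmaFinite_mulHaar
  rw [setIntegral_congr_fun ((h.measurableSet_valShell m).prod (h.measurableSet_valShell n))
      (h.gPrime_eqOn_valShell_prod g s m n),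
    setIntegral_prod_mul (fun x => g (π ^ (min m n - m) * x) * ((q : ℂ) ^ (-s)) ^ m)
      (fun _ => ((q : ℂ) ^ (-s)) ^ n),
    integral_mul_const, h.setIntegral_valShell_comp, setIntegral_const, h.measureReal_valShell,
    zpow_add₀ (h.natCast_cpow_ne_zero _), Complex.real_smul]
  ring

theorem setIntegral_norm_gPrime_valShell_prod (s : ℂ) (m n : ℤ) :
    ∫ p in valShell w m ×ˢ valShell w n, ‖gPrime q w π g s p‖ ∂ν² =
      (∫ x in valShell w (min m n), ‖g x‖ ∂ν) * (ν).real (valShell w 0) *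
        ‖(q : ℂ) ^ (-s)‖ ^ (m + n) := by
  have := h.sigmaFinite_mulHaar
  have hdil : ∫ x in valShell w m, ‖g (π ^ (min m n - m) * x)‖ ∂ν =
      ∫ x in valShell w (min m n), ‖g x‖ ∂ν := by
    exact_mod_cast h.setIntegral_valShell_comp (fun x => (‖g x‖ : ℂ)) (min m n) m
  rw [setIntegral_congr_fun ((h.measurableSet_valShell m).prod (h.measurableSet_valShell n))
      fun p hp => by rw [h.gPrime_eqOn_valShell_prod g s m n hp, norm_mul, norm_mul, norm_zpow,
        norm_zpow],
    setIntegral_prod_mul (fun x => ‖g (π ^ (min m n - m) * x)‖ * ‖(q : ℂ) ^ (-s)‖ ^ m)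
      (fun _ => ‖(q : ℂ) ^ (-s)‖ ^ n),
    integral_mul_const, hdil, setIntegral_const, h.measureReal_valShell,
    zpow_add₀ (norm_ne_zero_iff.mpr (h.natCast_cpow_ne_zero _)), smul_eq_mul]
  ring

theorem integrable_gPrime {s : ℂ} (ht : ‖(q : ℂ) ^ (-s)‖ < 1)
    (hg : ∀ k, IntegrableOn g (valShell w k) ν)
    (hb : Summable fun k => (∫ x in valShell w k, ‖g x‖ ∂ν) * ‖(q : ℂ) ^ (-s)‖ ^ (2 * k)) :
    Integrable (gPrime q w π g s) ν² := by
  have hnorm : Summable fun p : ℤ × ℤ =>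
      ∫ z in valShell w p.1 ×ˢ valShell w p.2, ‖gPrime q w π g s z‖ ∂ν² := by
    simp_rw [h.setIntegral_norm_gPrime_valShell_prod]
    refine (hasSum_mul_zpow_min (c := fun k => (∫ x in valShell w k, ‖g x‖ ∂ν) *
      (ν).real (valShell w 0)) (norm_ne_zero_iff.mpr (h.natCast_cpow_ne_zero _))
      (by rwa [norm_norm]) ?_).summable
    simpa only [Real.norm_eq_abs, mul_right_comm _ ((ν).real (valShell w 0))] using
      (hb.mul_right ((ν).real (valShell w 0))).abs
  exact (integrableOn_iff_integrable_of_support_subset (support_gPrime_subset g s)).mp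
    (integrableOn_iUnion_of_summable_integral_norm
      (fun p => h.integrableOn_gPrime_valShell_prod s (hg _)) hnorm)

theorem integral_gPrime {s A : ℂ} (ht : ‖(q : ℂ) ^ (-s)‖ < 1)
    (hF : Integrable (gPrime q w π g s) ν²)
    (hb : Summable fun k => (∫ x in valShell w k, ‖g x‖ ∂ν) * ‖(q : ℂ) ^ (-s)‖ ^ (2 * k))
    (hA : HasSum (fun k => (∫ x in valShell w k, g x ∂ν) * ((q : ℂ) ^ (-s)) ^ (2 * k)) A) :
    ∫ p, gPrime q w π g s p ∂ν² =
      (ν).real (valShell w 0) * ((1 + (q : ℂ) ^ (-s)) / (1 - (q : ℂ) ^ (-s))) * A := by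
  set V := (ν).real (valShell w 0)
  set t := (q : ℂ) ^ (-s)
  have ha : Summable fun k => ‖(∫ x in valShell w k, g x ∂ν) * V * t ^ (2 * k)‖ := by
    refine (hb.mul_right V).of_nonneg_of_le (fun _ => norm_nonneg _) fun k => ?_
    rw [norm_mul, norm_mul, norm_zpow, Complex.norm_real, Real.norm_of_nonneg measureReal_nonneg,
      mul_right_comm _ V]
    gcongr
    exact norm_integral_le_integral_norm _
  have hsum := hasSum_setIntegral_of_support_subset
    (fun p : ℤ × ℤ => (h.measurableSet_valShell p.1).prod (h.measurableSet_valShell p.2))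
    pairwise_disjoint_valShell_prod (support_gPrime_subset g s) hF
  simp_rw [h.setIntegral_gPrime_valShell_prod] at hsum
  have hAV : HasSum (fun k => (∫ x in valShell w k, g x ∂ν) * V * t ^ (2 * k)) (A * V) := by
    simpa only [mul_right_comm _ _ (V : ℂ)] using hA.mul_right (V : ℂ)
  rw [hsum.unique (hasSum_mul_zpow_min (c := fun k => (∫ x in valShell w k, g x ∂ν) * V)
    (h.natCast_cpow_ne_zero _) ht ha), hAV.tsum_eq]
  ring

end Measurability

end IsNALocalField

theorem statement18_general
    {K : Type*} [Field K] [TopologicalSpace K] [IsTopologicalRing K]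
    [MeasurableSpace K] [BorelSpace K]
    (μ : Measure K) [μ.IsAddHaarMeasure]
    (w : K → ℤ) (π : K) (q : ℕ) (h : IsNALocalField μ w π q)
    (g : K → ℂ) (s : ℂ) (hs : 0 < s.re)
    (hint : Integrable (fun x => if x ≠ 0 then g x * ((absv q w x : ℂ) ^ (2 * s)) else 0)
      (mulHaar μ q w)) :
    Integrable
      (fun p : K × K =>
        if p.1 ≠ 0 ∧ p.2 ≠ 0 then
          g (π ^ (min (w p.1) (w p.2) - w p.1) * p.1) *
            (((absv q w p.1 * absv q w p.2 : ℝ) : ℂ) ^ s)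
        else 0)
      ((mulHaar μ q w).prod (mulHaar μ q w)) ∧
    (∫ p : K × K,
        (if p.1 ≠ 0 ∧ p.2 ≠ 0 then
          g (π ^ (min (w p.1) (w p.2) - w p.1) * p.1) *
            (((absv q w p.1 * absv q w p.2 : ℝ) : ℂ) ^ s)
        else 0) ∂((mulHaar μ q w).prod (mulHaar μ q w)))
      = ((mulHaar μ q w {x : K | x ≠ 0 ∧ w x = 0}).toReal : ℂ) *
          ((1 + (q : ℂ) ^ (-s)) / (1 - (q : ℂ) ^ (-s))) *
          ∫ x, (if x ≠ 0 then g x * ((absv q w x : ℂ) ^ (2 * s)) else 0) ∂(mulHaar μ q w) := by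
  change Integrable (mulAbsCpow q w g (2 * s)) _ at hint
  have ht := h.norm_natCast_cpow_neg_lt_one hs
  have hA : HasSum (fun k => (∫ x in valShell w k, g x ∂mulHaar μ q w) * ((q : ℂ) ^ (-s)) ^ (2 * k))
      (∫ x, mulAbsCpow q w g (2 * s) x ∂mulHaar μ q w) := by
    simpa only [cpow_neg_two_mul_zpow] using h.hasSum_setIntegral_valShell_mulAbsCpow hint
  have hb : Summable fun k =>
      (∫ x in valShell w k, ‖g x‖ ∂mulHaar μ q w) * ‖(q : ℂ) ^ (-s)‖ ^ (2 * k) := by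
    simpa only [← norm_zpow, cpow_neg_two_mul_zpow] using
      h.summable_setIntegral_norm_valShell hint
  have hF := h.integrable_gPrime ht (h.integrableOn_valShell_of_integrable_mulAbsCpow hint) hb
  exact ⟨hF, h.integral_gPrime ht hF hb hA⟩

/-- Let `g : K → ℂ` and `Re(s) > 0` be such that `x ↦ g(x)|x|^{2s}` is
absolutely integrable on `K^×` for `d^×x`.  Then
`g'(x,y) = g(π^{min(w x,w y)-w x}·x)·|xy|^s` is integrable on `K^× × K^×` and
`∫∫ g'(x,y) d^×x d^×y = μ^×(O_K^×)·((1+q^{-s})/(1-q^{-s}))·∫ g(x)|x|^{2s} d^×x`. -/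
theorem statement18
    {K : Type*} [Field K] [TopologicalSpace K] [IsTopologicalRing K]
    [LocallyCompactSpace K] [MeasurableSpace K] [BorelSpace K]
    (μ : Measure K) [μ.IsAddHaarMeasure]
    (w : K → ℤ) (π : K) (q : ℕ) (h : IsNALocalField μ w π q)
    (g : K → ℂ) (s : ℂ) (hs : 0 < s.re)
    (hint : Integrable (fun x => if x ≠ 0 then g x * ((absv q w x : ℂ) ^ (2 * s)) else 0)
      (mulHaar μ q w)) :
    Integrable
      (fun p : K × K =>
        if p.1 ≠ 0 ∧ p.2 ≠ 0 then
          g (π ^ (min (w p.1) (w p.2) - w p.1) * p.1) *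
            (((absv q w p.1 * absv q w p.2 : ℝ) : ℂ) ^ s)
        else 0)
      ((mulHaar μ q w).prod (mulHaar μ q w)) ∧
    (∫ p : K × K,
        (if p.1 ≠ 0 ∧ p.2 ≠ 0 then
          g (π ^ (min (w p.1) (w p.2) - w p.1) * p.1) *
            (((absv q w p.1 * absv q w p.2 : ℝ) : ℂ) ^ s)
        else 0) ∂((mulHaar μ q w).prod (mulHaar μ q w)))
      = ((mulHaar μ q w {x : K | x ≠ 0 ∧ w x = 0}).toReal : ℂ) *
          ((1 + (q : ℂ) ^ (-s)) / (1 - (q : ℂ) ^ (-s))) *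
          ∫ x, (if x ≠ 0 then g x * ((absv q w x : ℂ) ^ (2 * s)) else 0) ∂(mulHaar μ q w) :=
  statement18_general μ w π q h g s hs hint
end
end
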